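/- Let (X,d) be a compact metric space, f : X → X continuous, μ an ergodic f-invariant Borel probability measure, and Δ a Borel set with μ(Δ) > 1 - δ/2 for some 0 < δ < 1. Let ξ be a finite Borel partition refining {Δ, X\Δ}, m ∈ ℕ, and define Δ_n = {x ∈ Δ : ∃ l ∈ [n, (1+1/m)n] ∩ ℕ with f^l(x) ∈ ξ(x)}. Then μ(Δ_n) → μ(Δ) as n → ∞; in particular μ(Δ_n) > 1 - δ for all large n. -/

import Mathlib

/-!
Borel–Cantelli replaces the ergodic theorem. Let `S_k ⊆ s` be the points whose first return
to `s` takes more than `k` steps. Invariance gives `∑ₖ μ(S_k) ≤ 1` (Kac), hence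
`∑ᵣ μ(f⁻ʳ S_{⌊r/m⌋}) ≤ m`, so for a.e. `x` every late visit `fʳ x ∈ s` is followed by another
one within `r/m` steps. By Poincaré recurrence `x ∈ s` visits `s` infinitely often, and the
step after the last visit before `n` lands in `[n, (1 + 1/m) n]`. Applied to every cell of the
partition this puts a.e. `x ∈ Δ` eventually in `Δ_n`, and dominated convergence concludes.
-/

open Filter MeasureTheory
open scoped ENNReal

section ReturnTimes

variable {X : Type*} {f : X → X} {s : Set X}

def avoidSet (f : X → X) (s : Set X) (k : ℕ) : Set X := {x | ∀ j < k, f^[j] x ∉ s}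

def lateReturnSet (f : X → X) (s : Set X) (k : ℕ) : Set X := {x ∈ s | ∀ j < k, f^[j + 1] x ∉ s}

theorem preimage_avoidSet_inter (k : ℕ) :
    f ⁻¹' avoidSet f s k ∩ s = lateReturnSet f s k := by
  ext x
  simp [avoidSet, lateReturnSet, Function.iterate_succ_apply, and_comm]

theorem preimage_avoidSet_sdiff (k : ℕ) :
    f ⁻¹' avoidSet f s k \ s = avoidSet f s (k + 1) := by
  ext x
  simp only [avoidSet, Set.mem_sdiff, Set.mem_preimage, Set.mem_ofPred_eq,
    Nat.forall_lt_succ_left, Function.iterate_succ_apply, Function.iterate_zero, id]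
  exact and_comm

variable [MeasurableSpace X] {μ : Measure X}

theorem measurableSet_avoidSet (hf : Measurable f) (hs : MeasurableSet s) (k : ℕ) :
    MeasurableSet (avoidSet f s k) := by
  simp only [avoidSet, Set.ofPred_forall]
  exact MeasurableSet.iInter fun j => MeasurableSet.iInter fun _ => (hf.iterate j) hs.compl

theorem measurableSet_lateReturnSet (hf : Measurable f) (hs : MeasurableSet s) (k : ℕ) :
    MeasurableSet (lateReturnSet f s k) := by
  simp only [lateReturnSet, Set.ofPred_and, Set.ofPred_forall, Set.ofPred_mem_eq]
  exact hs.inter <| MeasurableSet.iInter fun j => MeasurableSet.iInter fun _ =>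
    (hf.iterate (j + 1)) hs.compl

theorem MeasureTheory.MeasurePreserving.measure_avoidSet (hf : MeasurePreserving f μ μ)
    (hs : MeasurableSet s) (k : ℕ) :
    μ (avoidSet f s k) = μ (lateReturnSet f s k) + μ (avoidSet f s (k + 1)) := by
  rw [← preimage_avoidSet_inter, ← preimage_avoidSet_sdiff, measure_inter_add_sdiff _ hs,
    hf.measure_preimage (measurableSet_avoidSet hf.measurable hs k).nullMeasurableSet]

theorem MeasureTheory.MeasurePreserving.sum_measure_lateReturnSet_add
    (hf : MeasurePreserving f μ μ) (hs : MeasurableSet s) (K : ℕ) :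
    ∑ k ∈ Finset.range K, μ (lateReturnSet f s k) + μ (avoidSet f s K) = μ Set.univ := by
  induction K with
  | zero => simp [avoidSet]
  | succ K ih => rw [Finset.sum_range_succ, add_assoc, ← hf.measure_avoidSet hs, ih]

/-- Kac's lemma in disguise: the sum is the integral over `s` of the first return time. -/
theorem MeasureTheory.MeasurePreserving.tsum_measure_lateReturnSet_le
    (hf : MeasurePreserving f μ μ) (hs : MeasurableSet s) :
    ∑' k, μ (lateReturnSet f s k) ≤ μ Set.univ :=
  ENNReal.tsum_le_of_sum_range_le fun K =>
    (hf.sum_measure_lateReturnSet_add hs K).symm ▸ le_self_add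

theorem MeasureTheory.MeasurePreserving.tsum_measure_preimage_lateReturnSet_div_le
    (hf : MeasurePreserving f μ μ) (hs : MeasurableSet s) {m : ℕ} (hm : 0 < m) :
    ∑' r, μ (f^[r] ⁻¹' lateReturnSet f s (r / m)) ≤ m * μ Set.univ := by
  have : NeZero m := ⟨hm.ne'⟩
  calc ∑' r, μ (f^[r] ⁻¹' lateReturnSet f s (r / m))
      = ∑' r, μ (lateReturnSet f s (r / m)) :=
        tsum_congr fun r => (hf.iterate r).measure_preimage
          (measurableSet_lateReturnSet hf.measurable hs _).nullMeasurableSet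
    _ = ∑' p : ℕ × Fin m, μ (lateReturnSet f s p.1) :=
        (Nat.divModEquiv m).tsum_eq fun p => μ (lateReturnSet f s p.1)
    _ = ∑' k, m * μ (lateReturnSet f s k) := by
        rw [ENNReal.tsum_prod (f := fun k (_ : Fin m) => μ (lateReturnSet f s k))]
        simp [tsum_fintype]
    _ ≤ m * μ Set.univ := by
        rw [ENNReal.tsum_mul_left]
        gcongr
        exact hf.tsum_measure_lateReturnSet_le hs

theorem MeasureTheory.MeasurePreserving.ae_eventually_return_within_div
    [IsFiniteMeasure μ] (hf : MeasurePreserving f μ μ) (hs : MeasurableSet s) {m : ℕ}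
    (hm : 0 < m) :
    ∀ᵐ x ∂μ, ∀ᶠ r in atTop, f^[r] x ∈ s → ∃ j < r / m, f^[r + (j + 1)] x ∈ s := by
  have hsum : ∑' r, μ (f^[r] ⁻¹' lateReturnSet f s (r / m)) ≠ ∞ :=
    ne_top_of_le_ne_top (by finiteness) (hf.tsum_measure_preimage_lateReturnSet_div_le hs hm)
  filter_upwards [ae_eventually_notMem hsum] with x hx
  filter_upwards [hx] with r hr hrs
  simp only [Set.mem_preimage, lateReturnSet, Set.mem_ofPred_eq, not_and, not_forall,
    not_not] at hr
  obtain ⟨j, hj, hjs⟩ := hr hrs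
  exact ⟨j, hj, by rwa [add_comm r, Function.iterate_add_apply]⟩

end ReturnTimes

theorem Nat.eventually_exists_mem_window_of_frequently {p : ℕ → Prop} {m : ℕ}
    (hfreq : ∃ᶠ r in atTop, p r)
    (hgap : ∀ᶠ r in atTop, p r → ∃ j < r / m, p (r + (j + 1))) :
    ∀ᶠ n in atTop, ∃ l : ℕ, n ≤ l ∧ (l : ℝ) ≤ (1 + 1 / (m : ℝ)) * (n : ℝ) ∧ p l := by
  classical
  obtain ⟨R, hR⟩ := eventually_atTop.1 hgap
  obtain ⟨r₀, hr₀, hr₀R⟩ := (hfreq.and_eventually (eventually_ge_atTop R)).exists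
  filter_upwards [eventually_gt_atTop r₀] with n hn
  -- `r` is the last time before `n` at which `p` holds; the gap bound at `r` overshoots `n`.
  set r := Nat.findGreatest p (n - 1)
  have hr₀r : r₀ ≤ r := Nat.le_findGreatest (by omega) hr₀
  have hrn : r ≤ n - 1 := Nat.findGreatest_le _
  obtain ⟨j, hj, hpj⟩ := hR r (hr₀R.trans hr₀r) (Nat.findGreatest_spec (by omega) hr₀)
  have hnl : n ≤ r + (j + 1) := by
    by_contra! h
    exact Nat.findGreatest_is_greatest (show r < r + (j + 1) by omega) (by omega) hpj
  refine ⟨_, hnl, ?_, hpj⟩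
  have hlr : r + (j + 1) ≤ r + r / m := by omega
  calc ((r + (j + 1) : ℕ) : ℝ) ≤ r + ((r / m : ℕ) : ℝ) := by exact_mod_cast hlr
    _ ≤ r + r / m := by gcongr; exact Nat.cast_div_le
    _ = (1 + 1 / (m : ℝ)) * r := by ring
    _ ≤ (1 + 1 / (m : ℝ)) * n := by gcongr; omega

theorem MeasureTheory.MeasurePreserving.ae_eventually_exists_iterate_mem_window
    {X : Type*} [MeasurableSpace X] {f : X → X} {μ : Measure X} [IsFiniteMeasure μ]
    (hf : MeasurePreserving f μ μ) {s : Set X} (hs : MeasurableSet s) {m : ℕ} (hm : 0 < m) :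
    ∀ᵐ x ∂μ, x ∈ s → ∀ᶠ n in atTop,
      ∃ l : ℕ, n ≤ l ∧ (l : ℝ) ≤ (1 + 1 / (m : ℝ)) * (n : ℝ) ∧ f^[l] x ∈ s := by
  filter_upwards [hf.conservative.ae_mem_imp_frequently_image_mem hs.nullMeasurableSet,
    hf.ae_eventually_return_within_div hs hm] with x hrec hgap hxs
  exact Nat.eventually_exists_mem_window_of_frequently (hrec hxs) hgap

section Partition

variable {X : Type*} {P : Finset (Set X)} {cell : X → Set X}

theorem cell_eq_of_mem (hdisj : ∀ s ∈ P, ∀ u ∈ P, s ≠ u → Disjoint s u)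
    (hcell : ∀ x, cell x ∈ P ∧ x ∈ cell x) {s : Set X} (hs : s ∈ P) {x : X} (hx : x ∈ s) :
    cell x = s := by
  by_contra hne
  exact Set.disjoint_left.1 (hdisj _ (hcell x).1 _ hs hne) (hcell x).2 hx

theorem measurableSet_setOf_mem_cell [MeasurableSpace X] (hmeas : ∀ s ∈ P, MeasurableSet s)
    (hdisj : ∀ s ∈ P, ∀ u ∈ P, s ≠ u → Disjoint s u)
    (hcell : ∀ x, cell x ∈ P ∧ x ∈ cell x) {g : X → X} (hg : Measurable g) :
    MeasurableSet {x | g x ∈ cell x} := by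
  have : {x | g x ∈ cell x} = ⋃ s ∈ P, s ∩ g ⁻¹' s := by
    ext x
    simp only [Set.mem_ofPred_eq, Set.mem_iUnion, Set.mem_inter_iff, Set.mem_preimage,
      exists_prop]
    exact ⟨fun h => ⟨cell x, (hcell x).1, (hcell x).2, h⟩,
      fun ⟨s, hs, hxs, hgs⟩ => cell_eq_of_mem hdisj hcell hs hxs ▸ hgs⟩
  rw [this]
  exact Finset.measurableSet_biUnion P fun s hs => (hmeas s hs).inter (hg (hmeas s hs))

end Partition

theorem measure_of_return_time_sets_general
    {X : Type*} [MeasurableSpace X]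
    (f : X → X) (μ : Measure X) [IsProbabilityMeasure μ]
    (herg : Ergodic f μ)
    (δ : ℝ) (hδ0 : 0 < δ)
    (Δ : Set X) (hΔmeas : MeasurableSet Δ)
    (hΔ : ENNReal.ofReal (1 - δ / 2) < μ Δ)
    (m : ℕ) (hm : 0 < m)
    (P : Finset (Set X))
    (hmeas : ∀ s ∈ P, MeasurableSet s)
    (hdisj : ∀ s ∈ P, ∀ u ∈ P, s ≠ u → Disjoint s u)
    (cell : X → Set X) (hcell : ∀ x, cell x ∈ P ∧ x ∈ cell x) :
    Tendsto (fun n : ℕ =>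
        μ {x ∈ Δ | ∃ l : ℕ, n ≤ l ∧ (l : ℝ) ≤ (1 + 1 / (m : ℝ)) * (n : ℝ) ∧
          f^[l] x ∈ cell x}) atTop (nhds (μ Δ)) ∧
    ∀ᶠ n : ℕ in atTop,
      ENNReal.ofReal (1 - δ) <
        μ {x ∈ Δ | ∃ l : ℕ, n ≤ l ∧ (l : ℝ) ≤ (1 + 1 / (m : ℝ)) * (n : ℝ) ∧
          f^[l] x ∈ cell x} := by
  have hf := herg.toMeasurePreserving
  have hD_meas (n : ℕ) : MeasurableSet {x ∈ Δ | ∃ l : ℕ, n ≤ l ∧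
      (l : ℝ) ≤ (1 + 1 / (m : ℝ)) * (n : ℝ) ∧ f^[l] x ∈ cell x} := by
    simp only [Set.ofPred_and, Set.ofPred_exists, Set.ofPred_mem_eq]
    exact hΔmeas.inter <| MeasurableSet.iUnion fun l => .inter (.const _) <| .inter (.const _) <|
      measurableSet_setOf_mem_cell hmeas hdisj hcell (hf.measurable.iterate l)
  have hreturn : ∀ᵐ x ∂μ, ∀ s ∈ P, x ∈ s → ∀ᶠ n in atTop,
      ∃ l : ℕ, n ≤ l ∧ (l : ℝ) ≤ (1 + 1 / (m : ℝ)) * (n : ℝ) ∧ f^[l] x ∈ s :=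
    (eventually_all_finset P).2 fun s hs =>
      hf.ae_eventually_exists_iterate_mem_window (hmeas s hs) hm
  have hlim := tendsto_measure_of_ae_tendsto_indicator_of_isFiniteMeasure atTop hΔmeas hD_meas <| by
    filter_upwards [hreturn] with x hx
    by_cases hxΔ : x ∈ Δ
    · filter_upwards [hx _ (hcell x).1 (hcell x).2] with n hn
      exact iff_of_true ⟨hxΔ, hn⟩ hxΔ
    · exact .of_forall fun n => iff_of_false (fun h => hxΔ h.1) hxΔ
  refine ⟨hlim, hlim.eventually (lt_mem_nhds ?_)⟩
  exact (ENNReal.ofReal_le_ofReal (by linarith)).trans_lt hΔ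

/-- Return times into partition elements: if `μ` is ergodic for `f`, `Δ` has measure
`> 1 - δ/2`, `ξ` (given by the finite family `P` with cell map `cell`) is a finite partition
refining `{Δ, Δᶜ}`, and
`Δ_n = {x ∈ Δ : ∃ l ∈ [n, (1+1/m)n], f^l(x) ∈ ξ(x)}`, then `μ(Δ_n) → μ(Δ)`;
in particular `μ(Δ_n) > 1 - δ` for all large `n`. -/
theorem measure_of_return_time_sets
    {X : Type*} [MetricSpace X] [CompactSpace X] [MeasurableSpace X] [BorelSpace X]
    (f : X → X) (hf : Continuous f) (μ : Measure X) [IsProbabilityMeasure μ]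
    (herg : Ergodic f μ)
    (δ : ℝ) (hδ0 : 0 < δ) (hδ1 : δ < 1)
    (Δ : Set X) (hΔmeas : MeasurableSet Δ)
    (hΔ : ENNReal.ofReal (1 - δ / 2) < μ Δ)
    (m : ℕ) (hm : 0 < m)
    (P : Finset (Set X))
    (hmeas : ∀ s ∈ P, MeasurableSet s)
    (hdisj : ∀ s ∈ P, ∀ u ∈ P, s ≠ u → Disjoint s u)
    (hcover : ⋃ s ∈ P, s = Set.univ)
    (href : ∀ s ∈ P, s ⊆ Δ ∨ s ⊆ Δᶜ)
    (cell : X → Set X) (hcell : ∀ x, cell x ∈ P ∧ x ∈ cell x) :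
    Tendsto (fun n : ℕ =>
        μ {x ∈ Δ | ∃ l : ℕ, n ≤ l ∧ (l : ℝ) ≤ (1 + 1 / (m : ℝ)) * (n : ℝ) ∧
          f^[l] x ∈ cell x}) atTop (nhds (μ Δ)) ∧
    ∀ᶠ n : ℕ in atTop,
      ENNReal.ofReal (1 - δ) <
        μ {x ∈ Δ | ∃ l : ℕ, n ≤ l ∧ (l : ℝ) ≤ (1 + 1 / (m : ℝ)) * (n : ℝ) ∧
          f^[l] x ∈ cell x} :=
  measure_of_return_time_sets_general f μ herg δ hδ0 Δ hΔmeas hΔ m hm P hmeas hdisj cell hcell
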